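/- arXiv:1405.4294 — 2 statements merged into one kernel-verified Lean document; each statement's English description precedes it below -/
import Mathlib

section
/- Let G₀(λ) = Σ_{j=1}^k α_j ‖x_j‖² g(α_j λ) with g(λ) = (λ − sin λ)/(8 sin(λ/2)²), 0 < α_1 < … < α_k, and at least one x_j ≠ 0. If z = G₀(λ) for some λ > 0 then λ < 8|z|/(α_1²‖x‖²) + π α_k/α_1², where ‖x‖² = Σ_j ‖x_j‖². -/
noncomputable def g (l : ℝ) : ℝ := (l - Real.sin l) / (8 * (Real.sin (l / 2)) ^ 2)

open Finset Real

/- Since sin t < t and sin² ≤ 1, g t ≥ (t - sin t)/8 > (t - π)/8 for t > 0. Each term α_j g(α_j λ)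
is therefore larger than (α_j² λ - π α_j)/8 ≥ (α₁² λ - π α_k)/8; weighting by ‖x_j‖² and summing
gives (α₁² λ - π α_k) ‖x‖² < 8 z ≤ 8 |z|. -/

lemma sub_pi_div_eight_lt_g {t : ℝ} (ht : 0 < t) (hs : sin (t / 2) ≠ 0) :
    (t - π) / 8 < g t := by
  have hsq_le : sin (t / 2) ^ 2 ≤ 1 := sin_sq_le_one _
  have hnum : 0 < t - sin t := sub_pos.2 (sin_lt ht)
  calc (t - π) / 8 < (t - sin t) / 8 := by linarith [sin_le_one t, pi_gt_three]
    _ ≤ (t - sin t) / (8 * sin (t / 2) ^ 2) :=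
      div_le_div_of_nonneg_left hnum.le (by positivity) (by linarith)
    _ = g t := rfl

lemma lt_mul_g_mul {a a₁ aₖ l : ℝ} (ha₁ : 0 < a₁) (ha : a₁ ≤ a ∧ a ≤ aₖ) (hl : 0 < l)
    (hs : sin (a * l / 2) ≠ 0) :
    (l * a₁ ^ 2 - π * aₖ) / 8 < a * g (a * l) := by
  have ha_pos : 0 < a := ha₁.trans_le ha.1
  have hg := mul_lt_mul_of_pos_left (sub_pi_div_eight_lt_g (mul_pos ha_pos hl) hs) ha_pos
  have hsq : a₁ ^ 2 * l ≤ a ^ 2 * l := by gcongr; exact ha.1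
  nlinarith [pi_pos, ha.2]

theorem lambda_upper_bound_general (k : ℕ) (α : Fin k → ℝ) (α₁ αₖ : ℝ)
    (hα₁ : 0 < α₁) (hbounds : ∀ j, α₁ ≤ α j ∧ α j ≤ αₖ)
    (d : Fin k → ℕ) (x : (j : Fin k) → EuclideanSpace ℝ (Fin (d j)))
    (hx : ∃ j, x j ≠ 0)
    (l z : ℝ) (hl : 0 < l)
    (hpole : ∀ j, x j ≠ 0 → Real.sin (α j * l / 2) ≠ 0)
    (hz : z = ∑ j, α j * g (α j * l) * ‖x j‖ ^ 2) :
    l < 8 * |z| / (α₁ ^ 2 * (∑ j, ‖x j‖ ^ 2)) + Real.pi * αₖ / α₁ ^ 2 := by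
  obtain ⟨j₀, hj₀⟩ := hx
  set c := (l * α₁ ^ 2 - π * αₖ) / 8
  have hterm : ∀ j, x j ≠ 0 → c * ‖x j‖ ^ 2 < α j * g (α j * l) * ‖x j‖ ^ 2 := fun j hxj =>
    mul_lt_mul_of_pos_right (lt_mul_g_mul hα₁ (hbounds j) hl (hpole j hxj)) (by positivity)
  have hsum : c * ∑ j, ‖x j‖ ^ 2 < z := by
    rw [hz, mul_sum]
    refine sum_lt_sum (fun j _ => ?_) ⟨j₀, mem_univ _, hterm j₀ hj₀⟩
    by_cases hxj : x j = 0
    · simp [hxj]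
    · exact (hterm j hxj).le
  have hS : 0 < ∑ j, ‖x j‖ ^ 2 :=
    sum_pos' (fun j _ => by positivity) ⟨j₀, mem_univ _, by positivity⟩
  have hscale :
      (l - π * αₖ / α₁ ^ 2) * (α₁ ^ 2 * ∑ j, ‖x j‖ ^ 2) = 8 * (c * ∑ j, ‖x j‖ ^ 2) := by
    field_simp
    ring
  rw [← sub_lt_iff_lt_add, lt_div_iff₀ (by positivity), hscale]
  linarith [le_abs_self z]

theorem lambda_upper_bound (k : ℕ) (hk : 1 ≤ k) (α : Fin k → ℝ) (α₁ αₖ : ℝ)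
    (hα₁ : 0 < α₁) (hbounds : ∀ j, α₁ ≤ α j ∧ α j ≤ αₖ)
    (d : Fin k → ℕ) (x : (j : Fin k) → EuclideanSpace ℝ (Fin (d j)))
    (hx : ∃ j, x j ≠ 0)
    (l z : ℝ) (hl : 0 < l)
    (hpole : ∀ j, x j ≠ 0 → Real.sin (α j * l / 2) ≠ 0)
    (hz : z = ∑ j, α j * g (α j * l) * ‖x j‖ ^ 2) :
    l < 8 * |z| / (α₁ ^ 2 * (∑ j, ‖x j‖ ^ 2)) + Real.pi * αₖ / α₁ ^ 2 :=
  lambda_upper_bound_general k α α₁ αₖ hα₁ hbounds d x hx l z hl hpole hz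
end

section
/- Let g(λ) = (λ − sin λ)/(8 sin(λ/2)²) and 0 < δ ≤ 1. For any integer n ≥ 0 and any λ in the interval [2nπ + δπ, 2(n+1)π − δπ] one has g(λ) ≤ g((2(n+1) − δ)π) = (2π/(8 sin(δπ/2)²))·n + (2π − δπ + sin(δπ))/(8 sin(δπ/2)²). -/
/-!
On `[2nπ + a, 2(n+1)π - a]` the numerator `l - sin l` of `g` is increasing, while the
denominator `8 sin (l/2)² = 4 (1 - cos l)` is smallest at the two endpoints, where `cos l = cos a`.
So both effects favour the right endpoint, where `sin` and `sin (·/2)²` take the values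
`-sin a` and `sin (a/2)²`.
-/

open Real Set

lemma monotone_sub_sin : Monotone fun x : ℝ => x - sin x := by
  intro a b hab
  have h := (le_abs_self _).trans (abs_sin_sub_sin_le b a)
  rw [abs_of_nonneg (sub_nonneg.2 hab)] at h
  dsimp only
  linarith

lemma sin_half_sq (x : ℝ) : sin (x / 2) ^ 2 = (1 - cos x) / 2 := by
  rw [sin_sq_eq_half_sub, mul_div_cancel₀ x two_ne_zero]
  ring

lemma cos_le_cos_of_mem_Icc {a x : ℝ} (ha : 0 ≤ a) (hx : x ∈ Icc a (2 * π - a)) :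
    cos x ≤ cos a := by
  obtain ⟨hax, hxa⟩ := hx
  rcases le_total x π with hxπ | hπx
  · exact cos_le_cos_of_nonneg_of_le_pi ha hxπ hax
  · rw [← cos_two_pi_sub x]
    exact cos_le_cos_of_nonneg_of_le_pi ha (by linarith) (by linarith)

lemma sin_half_sq_le_of_mem_Icc {a x : ℝ} (n : ℤ) (ha : 0 ≤ a)
    (hx : x ∈ Icc (2 * n * π + a) (2 * (n + 1) * π - a)) :
    sin (a / 2) ^ 2 ≤ sin (x / 2) ^ 2 := by
  have hcos : cos x ≤ cos a := by
    rw [← cos_sub_int_mul_two_pi x n]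
    exact cos_le_cos_of_mem_Icc ha ⟨by linarith [hx.1], by linarith [hx.2]⟩
  rw [sin_half_sq, sin_half_sq]
  linarith

lemma g_nat_mul_two_pi_sub (n : ℕ) (a : ℝ) :
    g (n * (2 * π) - a) = (n * (2 * π) - a + sin a) / (8 * sin (a / 2) ^ 2) := by
  rw [g, sin_nat_mul_two_pi_sub, sin_half_sq, sin_half_sq, cos_nat_mul_two_pi_sub, sub_neg_eq_add]

lemma g_le_g_of_mem_Icc {a l : ℝ} (n : ℕ) (ha : 0 < a)
    (hl : l ∈ Icc (2 * n * π + a) (2 * (n + 1) * π - a)) :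
    g l ≤ g (2 * (n + 1) * π - a) := by
  obtain ⟨hl₁, hl₂⟩ := hl
  set y := 2 * (n + 1) * π - a
  have hsin_y : sin (y / 2) ^ 2 = sin (a / 2) ^ 2 := by
    rw [sin_half_sq, sin_half_sq, show y = ((n + 1 : ℕ) : ℤ) * (2 * π) - a by push_cast; ring,
      cos_int_mul_two_pi_sub]
  have ha_pi : a ≤ π := by linarith
  have hden_pos : 0 < sin (a / 2) ^ 2 :=
    pow_pos (sin_pos_of_pos_of_lt_pi (by positivity) (by linarith)) 2
  have hy_nonneg : 0 ≤ y := by linarith [show 0 ≤ 2 * (n : ℝ) * π by positivity]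
  apply div_le_div₀ (by linarith [sin_le hy_nonneg]) (monotone_sub_sin hl₂)
  · rw [hsin_y]; positivity
  · rw [hsin_y]
    exact mul_le_mul_of_nonneg_left (sin_half_sq_le_of_mem_Icc n ha.le ⟨hl₁, hl₂⟩) (by norm_num)

theorem g_bound_on_truncated_interval_general (δ : ℝ) (hδ : 0 < δ) (n : ℕ) :
    (∀ l ∈ Set.Icc (2 * n * Real.pi + δ * Real.pi) (2 * (n + 1) * Real.pi - δ * Real.pi),
      g l ≤ g ((2 * (n + 1) - δ) * Real.pi)) ∧
    g ((2 * (n + 1) - δ) * Real.pi) =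
      (2 * Real.pi / (8 * Real.sin (δ * Real.pi / 2) ^ 2)) * n +
        (2 * Real.pi - δ * Real.pi + Real.sin (δ * Real.pi)) /
          (8 * Real.sin (δ * Real.pi / 2) ^ 2) := by
  have hy : (2 * (n + 1) - δ) * π = 2 * (n + 1) * π - δ * π := by ring
  refine ⟨fun l hl => hy ▸ g_le_g_of_mem_Icc n (by positivity) hl, ?_⟩
  rw [show (2 * (n + 1) - δ) * π = ((n + 1 : ℕ) : ℝ) * (2 * π) - δ * π by push_cast; ring,
    g_nat_mul_two_pi_sub, div_mul_eq_mul_div, ← add_div]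
  congr 1
  push_cast
  ring

theorem g_bound_on_truncated_interval (δ : ℝ) (hδ : 0 < δ) (hδ1 : δ ≤ 1) (n : ℕ) :
    (∀ l ∈ Set.Icc (2 * n * Real.pi + δ * Real.pi) (2 * (n + 1) * Real.pi - δ * Real.pi),
      g l ≤ g ((2 * (n + 1) - δ) * Real.pi)) ∧
    g ((2 * (n + 1) - δ) * Real.pi) =
      (2 * Real.pi / (8 * Real.sin (δ * Real.pi / 2) ^ 2)) * n +
        (2 * Real.pi - δ * Real.pi + Real.sin (δ * Real.pi)) /
          (8 * Real.sin (δ * Real.pi / 2) ^ 2) :=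
  g_bound_on_truncated_interval_general δ hδ n
end
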